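/- Let k ∈ ℝ, ε ∈ (0, 10⁻³·min{2, 1+|k|}], and r0 > 0 with r0 ≤ 10⁻³ and |k|·r0 ≤ 10⁻³. Let r1 ∈ (0, r0] satisfy: (a) (1/2)·r ≤ sn_{k'}(r) ≤ 2r for all k' ∈ [k−1, k+1] and all r ∈ (0, r1]; (b) 0 ≤ (k−ε)r² + 2/log(1/r) + 1/(log(1/r))² ≤ 1 and 0 ≤ (k−ε)r² + 1/log(1/r) ≤ 1 for all r ∈ (0, r1]. Set r4 = ε·r1², w4 = log(1/r4), and α = √(1 − ε·sn_k(r1)²). Then there exist real numbers c1 and r3 with (1/32)·w4·ε·r1² ≤ c1 ≤ √(8r4)·w4 and 0 < r3 ≤ 4ε·r1², satisfying the matching system α·sn_{k−ε}(r3) = r4·(1 − c1/w4) and α·cn_{k−ε}(r3) = 1 − c1/w4 − c1/w4². -/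

import Mathlib

/-!
Since `k sn_k² + cn_k² = 1`, eliminating `r3` reduces the matching system to the single equation
`(k - ε) X² + Y² = α²` in `c1`, where `X = r4 (1 - c1/w4)` and `Y = 1 - c1/w4 - c1/w4²`.
As `α² = 1 - ε sn_k(r1)²` lies in `[1 - 4 r4, 1 - r4/4]`, the left side is `≥ α²` at
`c1 = w4 r4 / 32` and `≤ α²` at `c1 = √(8 r4) w4`, so the intermediate value theorem gives `c1`.
A second application, to `sn_{k-ε}` on `[0, 4 r4]` (where `sn_{k-ε}(4 r4) ≥ 2 r4`), gives `r3`
with `α sn_{k-ε}(r3) = X`; then `α cn_{k-ε}(r3) = Y` because both sides are positive and have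
equal squares.
-/

/-- `sn k` is the generalized sine function: solution of `sn'' + k·sn = 0`
with `sn(0)=0`, `sn'(0)=1`. -/
noncomputable def sn (k r : ℝ) : ℝ :=
  if 0 < k then Real.sin (Real.sqrt k * r) / Real.sqrt k
  else if k = 0 then r
  else Real.sinh (Real.sqrt (-k) * r) / Real.sqrt (-k)

/-- `cn k = (sn k)'`. -/
noncomputable def cn (k r : ℝ) : ℝ := deriv (sn k) r

open Set

lemma sn_of_pos {k : ℝ} (hk : 0 < k) : sn k = fun r => Real.sin (√k * r) / √k := by
  funext r; simp [sn, hk]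

lemma sn_zero_left : sn 0 = fun r => r := by
  funext r; simp [sn]

lemma sn_of_neg {k : ℝ} (hk : k < 0) : sn k = fun r => Real.sinh (√(-k) * r) / √(-k) := by
  funext r; simp [sn, hk.not_gt, hk.ne]

lemma sn_zero_right (k : ℝ) : sn k 0 = 0 := by
  rcases lt_trichotomy k 0 with hk | rfl | hk
  · simp [sn_of_neg hk]
  · simp [sn_zero_left]
  · simp [sn_of_pos hk]

lemma continuous_sn (k : ℝ) : Continuous (sn k) := by
  rcases lt_trichotomy k 0 with hk | rfl | hk
  · rw [sn_of_neg hk]; fun_prop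
  · rw [sn_zero_left]; fun_prop
  · rw [sn_of_pos hk]; fun_prop

lemma cn_of_pos {k : ℝ} (hk : 0 < k) (r : ℝ) : cn k r = Real.cos (√k * r) := by
  have hsqrt : √k ≠ 0 := (Real.sqrt_pos.mpr hk).ne'
  have hsin : HasDerivAt (fun r => Real.sin (√k * r)) (Real.cos (√k * r) * √k) r := by
    simpa [mul_comm] using ((hasDerivAt_id r).const_mul √k).sin
  rw [cn, sn_of_pos hk, (hsin.div_const √k).deriv]
  field_simp

lemma cn_zero_left (r : ℝ) : cn 0 r = 1 := by
  simp [cn, sn_zero_left]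

lemma cn_of_neg {k : ℝ} (hk : k < 0) (r : ℝ) : cn k r = Real.cosh (√(-k) * r) := by
  have hsqrt : √(-k) ≠ 0 := (Real.sqrt_pos.mpr (neg_pos.mpr hk)).ne'
  have hsinh : HasDerivAt (fun r => Real.sinh (√(-k) * r)) (Real.cosh (√(-k) * r) * √(-k)) r := by
    simpa [mul_comm] using ((hasDerivAt_id r).const_mul √(-k)).sinh
  rw [cn, sn_of_neg hk, (hsinh.div_const √(-k)).deriv]
  field_simp

lemma mul_sn_sq_add_cn_sq (k r : ℝ) : k * sn k r ^ 2 + cn k r ^ 2 = 1 := by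
  rcases lt_trichotomy k 0 with hk | rfl | hk
  · have hsq : √(-k) ^ 2 = -k := Real.sq_sqrt (neg_nonneg.mpr hk.le)
    have hsqrt : √(-k) ≠ 0 := (Real.sqrt_pos.mpr (neg_pos.mpr hk)).ne'
    rw [sn_of_neg hk, cn_of_neg hk, div_pow, ← Real.cosh_sq_sub_sinh_sq (√(-k) * r)]
    field_simp
    linear_combination Real.sinh (√(-k) * r) ^ 2 * hsq
  · simp [cn_zero_left]
  · have hsq : √k ^ 2 = k := Real.sq_sqrt hk.le
    have hsqrt : √k ≠ 0 := (Real.sqrt_pos.mpr hk).ne'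
    rw [sn_of_pos hk, cn_of_pos hk, div_pow, ← Real.sin_sq_add_cos_sq (√k * r)]
    field_simp
    linear_combination (-Real.sin (√k * r) ^ 2) * hsq

lemma cn_pos_of_mul_sq_lt {k r : ℝ} (hr : 0 ≤ r) (h : k * r ^ 2 < 2) : 0 < cn k r := by
  rcases lt_trichotomy k 0 with hk | rfl | hk
  · rw [cn_of_neg hk]; exact Real.cosh_pos _
  · rw [cn_zero_left]; exact one_pos
  · rw [cn_of_pos hk]
    have hx : 0 ≤ √k * r := by positivity
    have hsq : (√k * r) ^ 2 = k * r ^ 2 := by rw [mul_pow, Real.sq_sqrt hk.le]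
    apply Real.cos_pos_of_mem_Ioo
    constructor <;> nlinarith [Real.pi_gt_three]

theorem exists_mem_Ioc_sn_cn_eq {K α X Y R : ℝ} (hα : 0 < α) (hX : 0 < X) (hY : 0 < Y)
    (hXY : K * X ^ 2 + Y ^ 2 = α ^ 2) (hR : 0 ≤ R) (hKR : |K| * R ^ 2 < 2)
    (hXR : X ≤ α * sn K R) :
    ∃ r ∈ Ioc 0 R, α * sn K r = X ∧ α * cn K r = Y := by
  obtain ⟨r, ⟨hr0, hrR⟩, hsn⟩ : ∃ r ∈ Icc 0 R, α * sn K r = X :=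
    intermediate_value_Icc hR ((continuous_sn K).const_mul α).continuousOn
      ⟨by simpa [sn_zero_right] using hX.le, hXR⟩
  have hr : 0 < r := hr0.lt_of_ne <| by
    rintro rfl
    simp [sn_zero_right] at hsn
    linarith
  have hcn : 0 < cn K r := cn_pos_of_mul_sq_lt hr0 <| by
    nlinarith [le_abs_self K, abs_nonneg K, pow_le_pow_left₀ hr0 hrR 2]
  have hsq : (α * cn K r) ^ 2 = Y ^ 2 := by
    linear_combination α ^ 2 * mul_sn_sq_add_cn_sq K r - hXY - K * (α * sn K r + X) * hsn
  exact ⟨r, ⟨hr, hrR⟩, hsn, (pow_left_inj₀ (by positivity) hY.le two_ne_zero).mp hsq⟩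

noncomputable def matchingNorm (K R w c : ℝ) : ℝ :=
  K * (R * (1 - c / w)) ^ 2 + (1 - c / w - c / w ^ 2) ^ 2

lemma div_sq_le_div {c w : ℝ} (hc : 0 ≤ c) (hw : 1 ≤ w) : c / w ^ 2 ≤ c / w :=
  div_le_div_of_nonneg_left hc (by positivity) (le_self_pow₀ hw two_ne_zero)

lemma abs_mul_mul_sq_le {K R t : ℝ} (hR : 0 ≤ R) (hKR : |K| * R ≤ 1 / 8) (ht : |t| ≤ 1) :
    |K * (R * t) ^ 2| ≤ R / 8 := by
  rw [abs_mul, abs_pow, abs_mul, abs_of_nonneg hR]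
  have ht2 : |t| ^ 2 ≤ 1 := pow_le_one₀ (abs_nonneg t) ht
  calc |K| * (R * |t|) ^ 2 = |K| * R * (R * |t| ^ 2) := by ring
    _ ≤ 1 / 8 * R := by gcongr; nlinarith
    _ = R / 8 := by ring

lemma one_sub_div_four_le_matchingNorm {K R w : ℝ} (hR : 0 < R) (hR1 : R ≤ 1)
    (hKR : |K| * R ≤ 1 / 8) (hw : 1 ≤ w) : 1 - R / 4 ≤ matchingNorm K R w (w * R / 32) := by
  have hu : w * R / 32 / w = R / 32 := by field_simp
  have hv : w * R / 32 / w ^ 2 ≤ R / 32 := (div_sq_le_div (by positivity) hw).trans_eq hu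
  have hv0 : 0 ≤ w * R / 32 / w ^ 2 := by positivity
  have hK := abs_le.mp (abs_mul_mul_sq_le (t := 1 - R / 32) hR.le hKR
    (abs_le.mpr ⟨by linarith, by linarith⟩))
  rw [matchingNorm, hu]
  nlinarith

lemma matchingNorm_le_one_sub_four_mul {K R w : ℝ} (hR : 0 < R) (hR1 : R ≤ 1 / 128)
    (hKR : |K| * R ≤ 1 / 8) (hw : 1 ≤ w) : matchingNorm K R w (√(8 * R) * w) ≤ 1 - 4 * R := by
  set q := √(8 * R)
  have hq : q ^ 2 = 8 * R := Real.sq_sqrt (by positivity)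
  have hq0 : 0 < q := Real.sqrt_pos.mpr (by positivity)
  have hq1 : q ≤ 1 / 4 := by nlinarith
  have hu : q * w / w = q := by field_simp
  have hv : q * w / w ^ 2 ≤ q := (div_sq_le_div (by positivity) hw).trans_eq hu
  have hv0 : 0 ≤ q * w / w ^ 2 := by positivity
  have hK := abs_le.mp (abs_mul_mul_sq_le (t := 1 - q) hR.le hKR
    (abs_le.mpr ⟨by linarith, by linarith⟩))
  rw [matchingNorm, hu]
  nlinarith

lemma exists_matchingNorm_eq {K R w A : ℝ} (hR : 0 < R) (hR1 : R ≤ 1 / 128)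
    (hKR : |K| * R ≤ 1 / 8) (hw : 1 ≤ w) (hA : A ∈ Icc (1 - 4 * R) (1 - R / 4)) :
    ∃ c ∈ Icc (w * R / 32) (√(8 * R) * w),
      1 / 2 ≤ 1 - c / w - c / w ^ 2 ∧ matchingNorm K R w c = A := by
  have hq : √(8 * R) ≤ 1 / 4 := (Real.sqrt_le_left (by norm_num)).mpr (by linarith)
  have hlr : w * R / 32 ≤ √(8 * R) * w := by
    nlinarith [Real.le_sqrt (by positivity : (0 : ℝ) ≤ 8 * R) (by positivity) |>.mpr
      (by nlinarith : (8 * R) ^ 2 ≤ 8 * R)]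
  have hcont : ContinuousOn (matchingNorm K R w) (Icc (w * R / 32) (√(8 * R) * w)) := by
    unfold matchingNorm; fun_prop
  obtain ⟨c, ⟨hc0, hc1⟩, hc⟩ := intermediate_value_Icc' hlr hcont
    ⟨(matchingNorm_le_one_sub_four_mul hR hR1 hKR hw).trans hA.1,
      hA.2.trans (one_sub_div_four_le_matchingNorm hR (by linarith) hKR hw)⟩
  have hcw : c / w ≤ √(8 * R) := (div_le_iff₀ (by positivity)).mpr hc1
  have hcw2 := div_sq_le_div ((by positivity : 0 ≤ w * R / 32).trans hc0) hw
  exact ⟨c, ⟨hc0, hc1⟩, by linarith, hc⟩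

theorem exists_matching_solution {K R w α : ℝ} (hR : 0 < R) (hR1 : R ≤ 1 / 128)
    (hKR : |K| * R ≤ 1 / 8) (hw : 1 ≤ w) (hα : 0 < α) (hα2 : α ^ 2 ∈ Icc (1 - 4 * R) (1 - R / 4))
    (hsn : 2 * R ≤ sn K (4 * R)) :
    ∃ c r, c ∈ Icc (w * R / 32) (√(8 * R) * w) ∧ r ∈ Ioc 0 (4 * R) ∧
      α * sn K r = R * (1 - c / w) ∧ α * cn K r = 1 - c / w - c / w ^ 2 := by
  obtain ⟨c, hc, hY, hnorm⟩ := exists_matchingNorm_eq hR hR1 hKR hw hα2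
  have hc0 : 0 ≤ c := (by positivity : 0 ≤ w * R / 32).trans hc.1
  have hcw : 0 ≤ c / w := by positivity
  have hcw2 : 0 ≤ c / w ^ 2 := by positivity
  have hα1 : 1 / 2 ≤ α := by nlinarith [hα2.1]
  have hX : R * (1 - c / w) ≤ α * sn K (4 * R) := by
    nlinarith [mul_le_mul_of_nonneg_left hsn hα.le]
  obtain ⟨r, hr, hsnr, hcnr⟩ := exists_mem_Ioc_sn_cn_eq (K := K) (R := 4 * R) hα
    (mul_pos hR (by linarith)) (by linarith) hnorm (by positivity) (by nlinarith) hX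
  exact ⟨c, r, hc, hr, hsnr, hcnr⟩

lemma one_le_log_one_div {x : ℝ} (hx : 0 < x) (hx1 : x ≤ Real.exp (-1)) :
    1 ≤ Real.log (1 / x) := by
  rwa [Real.le_log_iff_exp_le (by positivity), le_one_div (Real.exp_pos 1) hx, one_div,
    ← Real.exp_neg]

theorem stmt_1 (k ε r0 r1 : ℝ)
    (hε0 : 0 < ε) (hε1 : ε ≤ (1 / 1000) * min 2 (1 + |k|))
    (hr01 : r0 ≤ 1 / 1000) (hkr0 : |k| * r0 ≤ 1 / 1000)
    (hr10 : 0 < r1) (hr11 : r1 ≤ r0)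
    (ha : ∀ k' ∈ Set.Icc (k - 1) (k + 1), ∀ r ∈ Set.Ioc (0 : ℝ) r1,
      (1 / 2) * r ≤ sn k' r ∧ sn k' r ≤ 2 * r) :
    ∃ c1 r3 : ℝ,
      (1 / 32) * Real.log (1 / (ε * r1 ^ 2)) * ε * r1 ^ 2 ≤ c1 ∧
      c1 ≤ Real.sqrt (8 * (ε * r1 ^ 2)) * Real.log (1 / (ε * r1 ^ 2)) ∧
      0 < r3 ∧ r3 ≤ 4 * ε * r1 ^ 2 ∧
      Real.sqrt (1 - ε * (sn k r1) ^ 2) * sn (k - ε) r3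
        = (ε * r1 ^ 2) * (1 - c1 / Real.log (1 / (ε * r1 ^ 2))) ∧
      Real.sqrt (1 - ε * (sn k r1) ^ 2) * cn (k - ε) r3
        = 1 - c1 / Real.log (1 / (ε * r1 ^ 2))
            - c1 / (Real.log (1 / (ε * r1 ^ 2))) ^ 2 := by
  have hε : ε ≤ 1 / 500 := by linarith [min_le_left 2 (1 + |k|)]
  have hr1 : r1 ≤ 1 / 1000 := hr11.trans hr01
  have hkr1 : |k| * r1 ≤ 1 / 1000 := (mul_le_mul_of_nonneg_left hr11 (abs_nonneg k)).trans hkr0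
  have hεr1 : ε * r1 ≤ 1 / 500000 := by nlinarith
  have hR : ε * r1 ^ 2 ≤ 1 / 128 := by nlinarith
  have hKR : |k - ε| * (ε * r1 ^ 2) ≤ 1 / 8 := by
    have : |k - ε| ≤ |k| + ε := (abs_sub _ _).trans_eq (by rw [abs_of_pos hε0])
    calc |k - ε| * (ε * r1 ^ 2) ≤ (|k| + ε) * (ε * r1 ^ 2) := by gcongr
      _ = |k| * r1 * (ε * r1) + ε * (ε * r1 ^ 2) := by ring
      _ ≤ 1 / 8 := by
        nlinarith [mul_le_mul hkr1 hεr1 (by positivity) (by norm_num),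
          mul_le_mul hε hR (by positivity) (by norm_num)]
  have hw : 1 ≤ Real.log (1 / (ε * r1 ^ 2)) :=
    one_le_log_one_div (by positivity) (by linarith [Real.exp_neg_one_gt_d9])
  obtain ⟨hs1, hs2⟩ := ha k ⟨by linarith, by linarith⟩ r1 ⟨hr10, le_rfl⟩
  obtain ⟨hsn, -⟩ := ha (k - ε) ⟨by linarith, by linarith⟩ (4 * (ε * r1 ^ 2))
    ⟨by positivity, by nlinarith⟩
  have hs : r1 ^ 2 / 4 ≤ sn k r1 ^ 2 ∧ sn k r1 ^ 2 ≤ 4 * r1 ^ 2 := ⟨by nlinarith, by nlinarith⟩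
  have hA : 1 - ε * sn k r1 ^ 2 ∈ Icc (1 - 4 * (ε * r1 ^ 2)) (1 - ε * r1 ^ 2 / 4) := by
    constructor <;> nlinarith [mul_le_mul_of_nonneg_left hs.1 hε0.le,
      mul_le_mul_of_nonneg_left hs.2 hε0.le]
  have hA0 : 0 < 1 - ε * sn k r1 ^ 2 := by linarith [hA.1]
  obtain ⟨c1, r3, hc1, hr3, hsn3, hcn3⟩ := exists_matching_solution (by positivity) hR hKR hw
    (Real.sqrt_pos.mpr hA0) (by rwa [Real.sq_sqrt hA0.le]) (by linarith)
  exact ⟨c1, r3, by linarith [hc1.1], hc1.2, hr3.1, by linarith [hr3.2], hsn3, hcn3⟩
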